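/- arXiv:1212.0048 — 3 statements merged into one kernel-verified Lean document; each statement's English description precedes it below -/
import Mathlib

section
/- Let k₀ ∈ {1,…,q−1} be the inverse of p modulo q and ℓ₀ ∈ {1,…,p−1} be the inverse of q modulo p. Then for every nonnegative integer U and every integer r with 1 < r < pq: if r = k₀p then W(pqU+r) = W(qU+k₀) + W(pU+p−ℓ₀); if r = ℓ₀q then W(pqU+r) = W(pU+ℓ₀) + W(qU+q−k₀); if r = kp for some integer 1 ≤ k < q with k ≠ k₀, or r = kp+1 for some integer 1 ≤ k < q with k ≠ q−k₀, then W(pqU+r) = W(qU+k); if r = ℓq for some integer 1 ≤ ℓ < p with ℓ ≠ ℓ₀, or r = ℓq+1 for some integer 1 ≤ ℓ < p with ℓ ≠ p−ℓ₀, then W(pqU+r) = W(pU+ℓ); in all remaining cases W(pqU+r) = 0. -/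
/-- A strictly chained `(p,q)`-ary partition of `U`: a finite strictly decreasing
list of positive integers of the form `p^a * q^b`, each part divisible by the next,
summing to `U`. -/
def IsSCPartition (p q U : ℕ) (l : List ℕ) : Prop :=
  (∀ x ∈ l, ∃ a b : ℕ, x = p ^ a * q ^ b) ∧
  List.Chain' (fun x y => y ∣ x ∧ y < x) l ∧
  l.sum = U

/-- The set of strictly chained `(p,q)`-ary partitions of `U`. -/
def Omega (p q U : ℕ) : Set (List ℕ) := {l | IsSCPartition p q U l}

/-- The subset of `Omega p q U` of partitions with no part equal to `1`. -/
def OmegaStar (p q U : ℕ) : Set (List ℕ) := {l | IsSCPartition p q U l ∧ 1 ∉ l}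

/-- `W p q U` is the number of strictly chained `(p,q)`-ary partitions of `U`. -/
noncomputable def W (p q U : ℕ) : ℕ := (Omega p q U).ncard

/-- `Wstar p q U` is the number of strictly chained `(p,q)`-ary partitions of `U`
with no part equal to `1`. -/
noncomputable def Wstar (p q U : ℕ) : ℕ := (OmegaStar p q U).ncard

/-!
Splitting off a possible smallest part `1` gives `W (N + 1) = W* (N + 1) + W* N`, where `W*`
counts the partitions without a part `1`. The smallest part of such a partition divides every
part, hence `N`, and is divisible by `p` or by `q`. So `W* N = 0` when neither `p` nor `q` divides
`N`, and if `q ∤ p * M` then all parts of a partition of `p * M` without a part `1` are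
multiples of `p`, whence `W* (p * M) = W M`. For `N = p * q * U + r` it remains to read off
which of `r` and `r - 1` is a multiple of `p` or of `q`: `k₀` and `q - k₀` are the only `k < q`
with `q ∣ k * p - 1`, resp. `q ∣ k * p + 1`, and `k₀ * p + ℓ₀ * q = p * q + 1` by the Chinese
remainder theorem.
-/

lemma mem_Omega_iff {p q U : ℕ} {l : List ℕ} :
    l ∈ Omega p q U ↔ (∀ x ∈ l, ∃ a b : ℕ, x = p ^ a * q ^ b) ∧
      l.Pairwise (fun x y => y ∣ x ∧ y < x) ∧ l.sum = U := by
  have : Trans (fun x y : ℕ => y ∣ x ∧ y < x) (fun x y => y ∣ x ∧ y < x)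
      (fun x y => y ∣ x ∧ y < x) :=
    ⟨fun hxy hyz => ⟨hyz.1.trans hxy.1, hyz.2.trans hxy.2⟩⟩
  show _ ∧ List.IsChain _ l ∧ _ ↔ _
  rw [List.isChain_iff_pairwise]

lemma Omega_finite (p q U : ℕ) : (Omega p q U).Finite := by
  classical
  refine Set.Finite.of_finite_image (f := List.toFinset) ?_ fun l₁ h₁ l₂ h₂ h => ?_
  · refine (Finset.range (U + 1)).powerset.finite_toSet.subset ?_
    rintro _ ⟨l, hl, rfl⟩
    simp only [Finset.mem_coe, Finset.mem_powerset]
    intro x hx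
    have hsum := (mem_Omega_iff.mp hl).2.2
    simpa [Nat.lt_succ_iff, ← hsum] using List.le_sum_of_mem (List.mem_toFinset.mp hx)
  · have hpw₁ := (mem_Omega_iff.mp h₁).2.1
    have hpw₂ := (mem_Omega_iff.mp h₂).2.1
    refine List.Perm.eq_of_pairwise (fun _ _ _ _ hab hba => absurd hab.2 hba.2.asymm) hpw₁ hpw₂ ?_
    exact List.perm_of_nodup_nodup_toFinset_eq (hpw₁.imp fun h => h.2.ne')
      (hpw₂.imp fun h => h.2.ne') h

lemma mem_OmegaStar_iff {p q U : ℕ} {l : List ℕ} :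
    l ∈ OmegaStar p q U ↔ l ∈ Omega p q U ∧ 1 ∉ l :=
  Iff.rfl

lemma OmegaStar_finite (p q U : ℕ) : (OmegaStar p q U).Finite :=
  (Omega_finite p q U).subset fun _ h => h.1

lemma Omega_comm (p q U : ℕ) : Omega p q U = Omega q p U := by
  ext l
  simp only [mem_Omega_iff]
  refine and_congr_left' (forall₂_congr fun x _ => ?_)
  rw [exists_comm]
  simp only [mul_comm]

lemma W_comm (p q U : ℕ) : W p q U = W q p U := by
  rw [W, W, Omega_comm]

lemma Wstar_comm (p q U : ℕ) : Wstar p q U = Wstar q p U := by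
  rw [Wstar, Wstar]
  congr 1
  ext l
  rw [mem_OmegaStar_iff, mem_OmegaStar_iff, Omega_comm]

lemma Omega_succ {p q : ℕ} (hp : 0 < p) (hq : 0 < q) (N : ℕ) :
    Omega p q (N + 1) = OmegaStar p q (N + 1) ∪ (· ++ [1]) '' OmegaStar p q N := by
  ext l
  simp only [Set.mem_union, Set.mem_image, mem_OmegaStar_iff, mem_Omega_iff]
  constructor
  · rintro ⟨hparts, hpw, hsum⟩
    by_cases h1 : 1 ∈ l
    · right
      obtain rfl | ⟨L, m, rfl⟩ := l.eq_nil_or_concat'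
      · simp at h1
      rw [List.pairwise_append] at hpw
      -- a part `1` must come last: a later part `m` would satisfy `m ∣ 1` and `m < 1`
      have hL : 1 ∉ L := fun h => by
        obtain ⟨hdvd, hlt⟩ := hpw.2.2 1 h m (List.mem_singleton_self m)
        obtain rfl : m = 0 := by omega
        simp at hdvd
      obtain rfl : m = 1 := by simpa [hL, eq_comm] using h1
      refine ⟨L, ⟨⟨fun x hx => hparts x (by simp [hx]), hpw.1, ?_⟩, hL⟩, rfl⟩
      simpa using hsum
    · exact .inl ⟨⟨hparts, hpw, hsum⟩, h1⟩
  · rintro (⟨hl, -⟩ | ⟨L, ⟨⟨hparts, hpw, hsum⟩, hL⟩, rfl⟩)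
    · exact hl
    refine ⟨?_, List.pairwise_append.mpr ⟨hpw, List.pairwise_singleton _ _, ?_⟩, by simp [hsum]⟩
    · simp only [List.mem_append, List.mem_singleton]
      rintro x (hx | rfl)
      · exact hparts x hx
      · exact ⟨0, 0, by simp⟩
    · rintro x hx y hy
      obtain rfl := List.mem_singleton.mp hy
      obtain ⟨a, b, rfl⟩ := hparts x hx
      have : p ^ a * q ^ b ≠ 1 := fun h => hL (h ▸ hx)
      exact ⟨one_dvd _, lt_of_le_of_ne (by positivity : 0 < p ^ a * q ^ b) (Ne.symm this)⟩

lemma W_succ {p q : ℕ} (hp : 0 < p) (hq : 0 < q) (N : ℕ) :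
    W p q (N + 1) = Wstar p q (N + 1) + Wstar p q N := by
  rw [W, Omega_succ hp hq, Set.ncard_union_eq _ (OmegaStar_finite p q _)
    ((OmegaStar_finite p q _).image _),
    Set.ncard_image_of_injective _ (List.append_left_injective [1]), Wstar, Wstar]
  rw [Set.disjoint_left]
  rintro l ⟨-, h1⟩ ⟨L, -, rfl⟩
  simp at h1

lemma forall_dvd_or_forall_dvd_of_mem_OmegaStar {p q N : ℕ} {l : List ℕ}
    (hl : l ∈ OmegaStar p q N) : (∀ x ∈ l, p ∣ x) ∨ ∀ x ∈ l, q ∣ x := by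
  obtain ⟨⟨hparts, hpw, -⟩, h1⟩ := mem_Omega_iff.mp hl.1, hl.2
  obtain rfl | ⟨L, m, rfl⟩ := l.eq_nil_or_concat'
  · simp
  have hm : ∀ x ∈ L ++ [m], m ∣ x := by
    simp only [List.mem_append, List.mem_singleton]
    rintro x (hx | rfl)
    · exact ((List.pairwise_append.mp hpw).2.2 x hx m (List.mem_singleton_self m)).1
    · exact dvd_rfl
  obtain ⟨a, b, hab⟩ := hparts m (by simp)
  have hm1 : m ≠ 1 := fun h => h1 (by simp [h])
  rcases Nat.eq_zero_or_pos a with rfl | ha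
  · rcases Nat.eq_zero_or_pos b with rfl | hb
    · simp [hab] at hm1
    · exact .inr fun x hx => (hab ▸ dvd_mul_of_dvd_right (dvd_pow_self q hb.ne') _).trans (hm x hx)
  · exact .inl fun x hx => (hab ▸ dvd_mul_of_dvd_left (dvd_pow_self p ha.ne') _).trans (hm x hx)

lemma Wstar_eq_zero {p q N : ℕ} (hpN : ¬ p ∣ N) (hqN : ¬ q ∣ N) : Wstar p q N = 0 := by
  rw [Wstar, Set.ncard_eq_zero (OmegaStar_finite p q N)]
  refine Set.eq_empty_of_forall_notMem fun l hl => ?_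
  have hsum : l.sum = N := hl.1.2.2
  rcases forall_dvd_or_forall_dvd_of_mem_OmegaStar hl with h | h
  · exact hpN (hsum ▸ List.dvd_sum h)
  · exact hqN (hsum ▸ List.dvd_sum h)

lemma exists_pow_mul_pow_eq_mul_iff {p q x : ℕ} (hp : 0 < p) (hpq : p.Coprime q) :
    (∃ a b : ℕ, p * x = p ^ a * q ^ b) ↔ ∃ a b : ℕ, x = p ^ a * q ^ b := by
  constructor
  · rintro ⟨_ | a, b, h⟩
    · obtain rfl : p = 1 := (hpq.pow_right b).eq_one_of_dvd ⟨x, by simpa using h.symm⟩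
      exact ⟨0, b, by simpa using h⟩
    · exact ⟨a, b, Nat.eq_of_mul_eq_mul_left hp (by rw [h]; ring)⟩
  · rintro ⟨a, b, rfl⟩
    exact ⟨a + 1, b, by ring⟩

lemma map_mul_mem_Omega_iff {p q M : ℕ} {l : List ℕ} (hp : 0 < p) (hpq : p.Coprime q) :
    l.map (p * ·) ∈ Omega p q (p * M) ↔ l ∈ Omega p q M := by
  simp only [mem_Omega_iff, List.forall_mem_map, exists_pow_mul_pow_eq_mul_iff hp hpq,
    List.pairwise_map, mul_dvd_mul_iff_left hp.ne', Nat.mul_lt_mul_left hp]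
  rw [List.sum_map_mul_left, List.map_id', Nat.mul_left_cancel_iff hp]

lemma OmegaStar_mul {p q M : ℕ} (hp : 1 < p) (hpq : p.Coprime q) (hqM : ¬ q ∣ p * M) :
    OmegaStar p q (p * M) = List.map (p * ·) '' Omega p q M := by
  ext l
  constructor
  · intro hl
    have hdvd : ∀ x ∈ l, p ∣ x := by
      refine (forall_dvd_or_forall_dvd_of_mem_OmegaStar hl).resolve_right fun h => hqM ?_
      exact (mem_Omega_iff.mp hl.1).2.2 ▸ List.dvd_sum h
    have hmap : (l.map (· / p)).map (p * ·) = l := by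
      rw [List.map_map]
      exact List.map_congr_left (fun x hx => Nat.mul_div_cancel' (hdvd x hx)) |>.trans l.map_id
    refine ⟨l.map (· / p), (map_mul_mem_Omega_iff (by omega) hpq).mp ?_, hmap⟩
    rw [hmap]
    exact hl.1
  · rintro ⟨L, hL, rfl⟩
    refine ⟨(map_mul_mem_Omega_iff (by omega) hpq).mpr hL, fun h1 => ?_⟩
    obtain ⟨x, -, hx⟩ := List.mem_map.mp h1
    exact hp.ne' (Nat.eq_one_of_mul_eq_one_right hx)

lemma eq_of_natCast_mul_eq_one {p q k₀ k : ℕ} (hk₀ : (p : ZMod q) * k₀ = 1) (hk₀q : k₀ < q)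
    (hkq : k < q) (hk : (p : ZMod q) * k = 1) : k = k₀ := by
  have : (k : ZMod q) = k₀ := by linear_combination k₀ * hk - k * hk₀
  rwa [ZMod.natCast_eq_natCast_iff', Nat.mod_eq_of_lt hkq, Nat.mod_eq_of_lt hk₀q] at this

lemma add_eq_of_natCast_mul_add_one_eq_zero {p q k₀ k : ℕ} (hk₀ : (p : ZMod q) * k₀ = 1)
    (hk₀q : k₀ < q) (hk0 : 0 < k) (hkq : k < q) (hk : (p : ZMod q) * k + 1 = 0) :
    k + k₀ = q := by
  have : ((k + k₀ : ℕ) : ZMod q) = 0 := by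
    push_cast
    linear_combination k₀ * hk - k * hk₀
  exact Nat.eq_of_dvd_of_lt_two_mul (by omega) ((ZMod.natCast_eq_zero_iff _ _).mp this) (by omega)

lemma mul_add_mul_eq_of_inverses {p q k₀ ℓ₀ : ℕ} (hpq : p.Coprime q)
    (hk₀ : (p : ZMod q) * k₀ = 1) (hk₀0 : 0 < k₀) (hk₀q : k₀ < q)
    (hℓ₀ : (q : ZMod p) * ℓ₀ = 1) (hℓ₀0 : 0 < ℓ₀) (hℓ₀p : ℓ₀ < p) :
    k₀ * p + ℓ₀ * q = p * q + 1 := by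
  have hmodp : k₀ * p + ℓ₀ * q ≡ 1 [MOD p] := by
    rw [← ZMod.natCast_eq_natCast_iff]
    push_cast
    rw [ZMod.natCast_self]
    linear_combination hℓ₀
  have hmodq : k₀ * p + ℓ₀ * q ≡ 1 [MOD q] := by
    rw [← ZMod.natCast_eq_natCast_iff]
    push_cast
    rw [ZMod.natCast_self]
    linear_combination hk₀
  have hk₀p : k₀ * p < p * q := by
    rw [mul_comm p q]
    exact Nat.mul_lt_mul_of_pos_right hk₀q (by omega)
  have hℓ₀q : ℓ₀ * q < p * q := Nat.mul_lt_mul_of_pos_right hℓ₀p (by omega)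
  have hpos : p ≤ k₀ * p := Nat.le_mul_of_pos_left p hk₀0
  have hdvd : p * q ∣ k₀ * p + ℓ₀ * q - 1 :=
    (Nat.modEq_iff_dvd' (by omega)).mp ((Nat.modEq_and_modEq_iff_modEq_mul hpq).mp
      ⟨hmodp, hmodq⟩).symm
  have := Nat.eq_of_dvd_of_lt_two_mul (by omega) hdvd (by omega)
  omega

lemma Wstar_p_mul {p q M : ℕ} (hp : 1 < p) (hpq : p.Coprime q) (hqM : ¬ q ∣ p * M) :
    Wstar p q (p * M) = W p q M := by
  rw [Wstar, OmegaStar_mul hp hpq hqM,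
    Set.ncard_image_of_injective _ (List.map_injective_iff.mpr (mul_right_injective₀ (by omega))),
    W]

lemma Wstar_q_mul {p q M : ℕ} (hq : 1 < q) (hpq : p.Coprime q) (hpM : ¬ p ∣ q * M) :
    Wstar p q (q * M) = W p q M := by
  rw [Wstar_comm, W_comm, Wstar_p_mul hq hpq.symm hpM]

lemma not_dvd_add_one_of_dvd {p M : ℕ} (hp : 1 < p) (h : p ∣ M) : ¬ p ∣ M + 1 := fun h₁ =>
  hp.ne' (Nat.dvd_one.mp ((Nat.dvd_add_right h).mp h₁))

lemma not_dvd_mul_mul_add {p q k : ℕ} (hpq : p.Coprime q) (hk0 : 0 < k) (hkq : k < q) (U : ℕ) :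
    ¬ q ∣ p * (q * U + k) := fun h =>
  have hk : q ∣ k := (Nat.dvd_add_right (dvd_mul_right q U)).mp (hpq.symm.dvd_of_dvd_mul_left h)
  absurd (Nat.le_of_dvd hk0 hk) (by omega)

lemma W_pqU_add_inv_mul {p q k₀ ℓ₀ : ℕ} (hp : 1 < p) (hq : 1 < q) (hpq : p.Coprime q)
    (hk₀ : (p : ZMod q) * k₀ = 1) (hk₀0 : 0 < k₀) (hk₀q : k₀ < q)
    (hℓ₀ : (q : ZMod p) * ℓ₀ = 1) (hℓ₀0 : 0 < ℓ₀) (hℓ₀p : ℓ₀ < p) (U : ℕ) :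
    W p q (p * q * U + k₀ * p) = W p q (q * U + k₀) + W p q (p * U + p - ℓ₀) := by
  have hid := mul_add_mul_eq_of_inverses hpq hk₀ hk₀0 hk₀q hℓ₀ hℓ₀0 hℓ₀p
  have hqM : q * (p * U + (p - ℓ₀)) + ℓ₀ * q = p * q * U + p * q := by
    rw [mul_comm ℓ₀, ← mul_add, add_assoc, Nat.sub_add_cancel hℓ₀p.le]
    ring
  have hsucc : p * q * U + k₀ * p = q * (p * U + (p - ℓ₀)) + 1 := by omega
  rw [Nat.add_sub_assoc hℓ₀p.le, hsucc, W_succ (by omega) (by omega), ← hsucc,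
    show p * q * U + k₀ * p = p * (q * U + k₀) by ring,
    Wstar_p_mul hp hpq (not_dvd_mul_mul_add hpq hk₀0 hk₀q U),
    Wstar_q_mul hq hpq (not_dvd_mul_mul_add hpq.symm (by omega) (by omega) U)]

lemma W_pqU_add_mul {p q k₀ k : ℕ} (hp : 1 < p) (hq : 1 < q) (hpq : p.Coprime q)
    (hk₀ : (p : ZMod q) * k₀ = 1) (hk₀q : k₀ < q) (U : ℕ) (hk0 : 0 < k) (hkq : k < q)
    (hne : k ≠ k₀) : W p q (p * q * U + k * p) = W p q (q * U + k) := by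
  obtain ⟨M, hM⟩ : ∃ M, p * q * U + k * p = M + 1 :=
    Nat.exists_eq_succ_of_ne_zero (by have := Nat.mul_pos hk0 (by omega : 0 < p); omega)
  have hpM : p * (q * U + k) = M + 1 := by rw [← hM]; ring
  rw [hM, W_succ (by omega) (by omega), ← hpM,
    Wstar_p_mul hp hpq (not_dvd_mul_mul_add hpq hk0 hkq U), Wstar_eq_zero, add_zero]
  · exact fun h => not_dvd_add_one_of_dvd hp h (hpM ▸ dvd_mul_right p _)
  · refine fun h => hne (eq_of_natCast_mul_eq_one hk₀ hk₀q hkq ?_)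
    have := congrArg (Nat.cast : ℕ → ZMod q) hM
    push_cast at this
    rw [ZMod.natCast_self, (ZMod.natCast_eq_zero_iff _ _).mpr h] at this
    linear_combination this

lemma W_pqU_add_mul_add_one {p q k₀ k : ℕ} (hp : 1 < p) (hq : 1 < q) (hpq : p.Coprime q)
    (hk₀ : (p : ZMod q) * k₀ = 1) (hk₀q : k₀ < q) (U : ℕ) (hk0 : 0 < k) (hkq : k < q)
    (hne : k ≠ q - k₀) : W p q (p * q * U + (k * p + 1)) = W p q (q * U + k) := by
  rw [show p * q * U + (k * p + 1) = p * (q * U + k) + 1 by ring, W_succ (by omega) (by omega),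
    Wstar_eq_zero (not_dvd_add_one_of_dvd hp (dvd_mul_right p _)), zero_add,
    Wstar_p_mul hp hpq (not_dvd_mul_mul_add hpq hk0 hkq U)]
  refine fun h => hne ?_
  have := add_eq_of_natCast_mul_add_one_eq_zero hk₀ hk₀q hk0 hkq ?_
  · omega
  have := (ZMod.natCast_eq_zero_iff _ _).mpr h
  push_cast at this
  rw [ZMod.natCast_self] at this
  linear_combination this

lemma W_pqU_add_eq_zero {p q : ℕ} (hp : 0 < p) (hq : 0 < q) (U r : ℕ)
    (hpr : ¬ ∃ k, r = k * p ∨ r = k * p + 1) (hqr : ¬ ∃ ℓ, r = ℓ * q ∨ r = ℓ * q + 1) :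
    W p q (p * q * U + r) = 0 := by
  have hquot : ∀ {d m : ℕ}, d ∣ p * q * U → d ∣ p * q * U + m → ∃ c, m = c * d := fun hU h =>
    let ⟨c, hc⟩ := (Nat.dvd_add_right hU).mp h
    ⟨c, hc.trans (mul_comm _ _)⟩
  have hpU : p ∣ p * q * U := (dvd_mul_right p q).mul_right U
  have hqU : q ∣ p * q * U := (dvd_mul_left q p).mul_right U
  obtain ⟨s, rfl⟩ : ∃ s, r = s + 1 :=
    Nat.exists_eq_succ_of_ne_zero fun h => hpr ⟨0, .inl (by simp [h])⟩
  rw [← add_assoc, W_succ hp hq, Nat.add_eq_zero_iff]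
  constructor <;> apply Wstar_eq_zero
  · exact fun h => hpr (let ⟨c, hc⟩ := hquot (m := s + 1) hpU h; ⟨c, .inl hc⟩)
  · exact fun h => hqr (let ⟨c, hc⟩ := hquot (m := s + 1) hqU h; ⟨c, .inl hc⟩)
  · exact fun h => hpr (let ⟨c, hc⟩ := hquot hpU h; ⟨c, .inr (by rw [hc])⟩)
  · exact fun h => hqr (let ⟨c, hc⟩ := hquot hqU h; ⟨c, .inr (by rw [hc])⟩)

theorem W_pqU_add_r_general (p q : ℕ) (hp : 1 < p) (hq : 1 < q) (hpq : Nat.Coprime p q)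
    (k₀ ℓ₀ : ℕ) (hk₀1 : 1 ≤ k₀) (hk₀2 : k₀ < q) (hk₀ : (p * k₀) % q = 1)
    (hℓ₀1 : 1 ≤ ℓ₀) (hℓ₀2 : ℓ₀ < p) (hℓ₀ : (q * ℓ₀) % p = 1)
    (U r : ℕ) :
    (r = k₀ * p →
      W p q (p * q * U + r) = W p q (q * U + k₀) + W p q (p * U + p - ℓ₀)) ∧
    (r = ℓ₀ * q →
      W p q (p * q * U + r) = W p q (p * U + ℓ₀) + W p q (q * U + q - k₀)) ∧
    (∀ k, 1 ≤ k → k < q → k ≠ k₀ → r = k * p →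
      W p q (p * q * U + r) = W p q (q * U + k)) ∧
    (∀ k, 1 ≤ k → k < q → k ≠ q - k₀ → r = k * p + 1 →
      W p q (p * q * U + r) = W p q (q * U + k)) ∧
    (∀ ℓ, 1 ≤ ℓ → ℓ < p → ℓ ≠ ℓ₀ → r = ℓ * q →
      W p q (p * q * U + r) = W p q (p * U + ℓ)) ∧
    (∀ ℓ, 1 ≤ ℓ → ℓ < p → ℓ ≠ p - ℓ₀ → r = ℓ * q + 1 →
      W p q (p * q * U + r) = W p q (p * U + ℓ)) ∧
    ((¬ ∃ k, r = k * p ∨ r = k * p + 1) → (¬ ∃ ℓ, r = ℓ * q ∨ r = ℓ * q + 1) →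
      W p q (p * q * U + r) = 0) := by
  have hk₀' : (p : ZMod q) * k₀ = 1 := by
    rw [← Nat.cast_mul, ← ZMod.natCast_mod, hk₀, Nat.cast_one]
  have hℓ₀' : (q : ZMod p) * ℓ₀ = 1 := by
    rw [← Nat.cast_mul, ← ZMod.natCast_mod, hℓ₀, Nat.cast_one]
  have hqp : q * p * U = p * q * U := by ring
  refine ⟨?_, ?_, ?_, ?_, ?_, ?_, W_pqU_add_eq_zero (by omega) (by omega) U r⟩
  · rintro rfl
    exact W_pqU_add_inv_mul hp hq hpq hk₀' hk₀1 hk₀2 hℓ₀' hℓ₀1 hℓ₀2 U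
  · rintro rfl
    simpa only [W_comm q p, hqp] using
      W_pqU_add_inv_mul hq hp hpq.symm hℓ₀' hℓ₀1 hℓ₀2 hk₀' hk₀1 hk₀2 U
  · rintro k hk1 hkq hne rfl
    exact W_pqU_add_mul hp hq hpq hk₀' hk₀2 U hk1 hkq hne
  · rintro k hk1 hkq hne rfl
    exact W_pqU_add_mul_add_one hp hq hpq hk₀' hk₀2 U hk1 hkq hne
  · rintro ℓ hℓ1 hℓp hne rfl
    simpa only [W_comm q p, hqp] using W_pqU_add_mul hq hp hpq.symm hℓ₀' hℓ₀2 U hℓ1 hℓp hne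
  · rintro ℓ hℓ1 hℓp hne rfl
    simpa only [W_comm q p, hqp] using
      W_pqU_add_mul_add_one hq hp hpq.symm hℓ₀' hℓ₀2 U hℓ1 hℓp hne

theorem W_pqU_add_r (p q : ℕ) (hp : 1 < p) (hq : 1 < q) (hpq : Nat.Coprime p q)
    (k₀ ℓ₀ : ℕ) (hk₀1 : 1 ≤ k₀) (hk₀2 : k₀ < q) (hk₀ : (p * k₀) % q = 1)
    (hℓ₀1 : 1 ≤ ℓ₀) (hℓ₀2 : ℓ₀ < p) (hℓ₀ : (q * ℓ₀) % p = 1)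
    (U r : ℕ) (hr1 : 1 < r) (hr2 : r < p * q) :
    (r = k₀ * p →
      W p q (p * q * U + r) = W p q (q * U + k₀) + W p q (p * U + p - ℓ₀)) ∧
    (r = ℓ₀ * q →
      W p q (p * q * U + r) = W p q (p * U + ℓ₀) + W p q (q * U + q - k₀)) ∧
    (∀ k, 1 ≤ k → k < q → k ≠ k₀ → r = k * p →
      W p q (p * q * U + r) = W p q (q * U + k)) ∧
    (∀ k, 1 ≤ k → k < q → k ≠ q - k₀ → r = k * p + 1 →
      W p q (p * q * U + r) = W p q (q * U + k)) ∧
    (∀ ℓ, 1 ≤ ℓ → ℓ < p → ℓ ≠ ℓ₀ → r = ℓ * q →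
      W p q (p * q * U + r) = W p q (p * U + ℓ)) ∧
    (∀ ℓ, 1 ≤ ℓ → ℓ < p → ℓ ≠ p - ℓ₀ → r = ℓ * q + 1 →
      W p q (p * q * U + r) = W p q (p * U + ℓ)) ∧
    ((¬ ∃ k, r = k * p ∨ r = k * p + 1) → (¬ ∃ ℓ, r = ℓ * q ∨ r = ℓ * q + 1) →
      W p q (p * q * U + r) = 0) :=
  W_pqU_add_r_general p q hp hq hpq k₀ ℓ₀ hk₀1 hk₀2 hk₀ hℓ₀1 hℓ₀2 hℓ₀ U r
end

section
/- Assume p = 2. Then for every nonnegative integer U and every integer r with 2 ≤ r ≤ q−1, W(qU+r) = W(⌊(qU+r)/2⌋). -/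
/-!
The smallest part of a strictly chained partition divides every part, hence the whole sum.
For `N = qU + r` with `2 ≤ r < q`, neither `N` nor `N - 1` is divisible by `q`, so the smallest
part of a partition of `N`, and of a partition of `N - 1` without the part `1`, is a power of `2`.
Removing a final part `1` splits the partitions of `N` into those of `N` and of `N - 1` without
the part `1`; if `N` is even there are none of the second kind, if `N` is odd none of the first.
A partition without the part `1` whose smallest part is a power of `2` has only even parts, and
halving them is a bijection onto the partitions of half the sum.
-/

section

variable {p q U : ℕ} {l : List ℕ}

lemma IsSCPartition.pairwise (h : IsSCPartition p q U l) :
    l.Pairwise (fun x y => y ∣ x ∧ y < x) :=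
  @List.IsChain.pairwise _ _ _ ⟨fun hab hbc => ⟨hbc.1.trans hab.1, hbc.2.trans hab.2⟩⟩ h.2.1

lemma IsSCPartition.dvd_lt_of_append_singleton {m x : ℕ} (h : IsSCPartition p q U (l ++ [m]))
    (hx : x ∈ l) : m ∣ x ∧ m < x :=
  (List.pairwise_append.mp h.pairwise).2.2 x hx m (List.mem_singleton_self m)

lemma IsSCPartition.dvd_sum_of_append_singleton {m : ℕ} (h : IsSCPartition p q U (l ++ [m])) :
    m ∣ U := by
  rw [← h.2.2, List.sum_append, List.sum_singleton]
  exact dvd_add (List.dvd_sum fun x hx => (h.dvd_lt_of_append_singleton hx).1) dvd_rfl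

lemma isSCPartition_append_one_iff (hp : 0 < p) (hq : 0 < q) :
    IsSCPartition p q (U + 1) (l ++ [1]) ↔ IsSCPartition p q U l ∧ 1 ∉ l := by
  constructor
  · intro h
    exact ⟨⟨fun x hx => h.1 x (List.mem_append_left _ hx), (List.isChain_append.mp h.2.1).1,
      by simpa using h.2.2⟩, fun h1 => (h.dvd_lt_of_append_singleton h1).2.false⟩
  · rintro ⟨⟨hparts, hchain, hsum⟩, hone⟩
    refine ⟨fun x hx => ?_, List.isChain_append.mpr ⟨hchain, .singleton 1, fun x hx y hy => ?_⟩,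
      by simp [hsum]⟩
    · rcases List.mem_append.mp hx with hx | hx
      · exact hparts x hx
      · exact ⟨0, 0, by simpa using hx⟩
    · obtain rfl : y = 1 := (by simpa using hy : 1 = y).symm
      have hxl := List.mem_of_mem_getLast? hx
      obtain ⟨a, b, rfl⟩ := hparts x hxl
      exact ⟨one_dvd _, lt_of_le_of_ne (by positivity : 0 < p ^ a * q ^ b) fun h => hone (h ▸ hxl)⟩

lemma omega_succ_eq_union (hp : 0 < p) (hq : 0 < q) :
    Omega p q (U + 1) = OmegaStar p q (U + 1) ∪ (· ++ [1]) '' OmegaStar p q U := by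
  ext l
  simp only [Omega, OmegaStar, Set.mem_union, Set.mem_image, Set.mem_ofPred_eq]
  constructor
  · intro hl
    by_cases hone : 1 ∈ l
    · right
      obtain ⟨l', m, rfl⟩ := (List.eq_nil_or_concat' l).resolve_left (by rintro rfl; simp at hone)
      obtain rfl : m = 1 := by
        rcases List.mem_append.mp hone with h1 | h1
        · exact Nat.dvd_one.mp (hl.dvd_lt_of_append_singleton h1).1
        · exact (List.mem_singleton.mp h1).symm
      exact ⟨l', (isSCPartition_append_one_iff hp hq).mp hl, rfl⟩
    · exact Or.inl ⟨hl, hone⟩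
  · rintro (⟨hl, -⟩ | ⟨l', hl', rfl⟩)
    · exact hl
    · exact (isSCPartition_append_one_iff hp hq).mpr hl'

lemma dvd_of_mem_omegaStar (hU : ¬ q ∣ U) (hl : l ∈ OmegaStar p q U) {x : ℕ} (hx : x ∈ l) :
    p ∣ x := by
  obtain ⟨hl, hone⟩ := hl
  obtain ⟨l', m, rfl⟩ := (List.eq_nil_or_concat' l).resolve_left (by rintro rfl; simp at hx)
  have hmx : m ∣ x := by
    rcases List.mem_append.mp hx with hx | hx
    · exact (hl.dvd_lt_of_append_singleton hx).1
    · rw [List.mem_singleton.mp hx]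
  have hmU := hl.dvd_sum_of_append_singleton
  obtain ⟨a, b, hm⟩ := hl.1 m (by simp)
  obtain rfl : b = 0 := by
    by_contra hb
    exact hU ((dvd_pow_self q hb).trans ((Dvd.intro_left _ hm.symm).trans hmU))
  obtain ⟨a, rfl⟩ : ∃ a', a = a' + 1 := by
    exact Nat.exists_eq_succ_of_ne_zero fun ha => hone (by simp [hm, ha])
  exact (hm ▸ (dvd_pow_self p a.succ_ne_zero).mul_right _ : p ∣ m).trans hmx

lemma omegaStar_eq_empty (hpU : ¬ p ∣ U) (hqU : ¬ q ∣ U) : OmegaStar p q U = ∅ := by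
  refine Set.eq_empty_of_forall_notMem fun l hl => hpU ?_
  rw [← hl.1.2.2]
  exact List.dvd_sum fun x hx => dvd_of_mem_omegaStar hqU hl hx

lemma exists_mul_eq_pow_mul_pow_iff (hp : 1 < p) (hpq : Nat.Coprime p q) {x : ℕ} :
    (∃ a b : ℕ, p * x = p ^ a * q ^ b) ↔ ∃ a b : ℕ, x = p ^ a * q ^ b := by
  constructor
  · rintro ⟨_ | a, b, h⟩
    · have := (Nat.Coprime.pow_right b hpq).eq_one_of_dvd (Dvd.intro x (by simpa using h))
      omega
    · exact ⟨a, b, Nat.eq_of_mul_eq_mul_left (show 0 < p by omega) (h.trans (by ring))⟩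
  · rintro ⟨a, b, rfl⟩
    exact ⟨a + 1, b, by ring⟩

lemma isSCPartition_map_mul_iff (hp : 1 < p) (hpq : Nat.Coprime p q) :
    IsSCPartition p q (p * U) (l.map (p * ·)) ↔ IsSCPartition p q U l := by
  have hp0 : 0 < p := by omega
  simp only [IsSCPartition, List.forall_mem_map, exists_mul_eq_pow_mul_pow_iff hp hpq]
  rw [List.Chain', List.isChain_map, List.sum_map_mul_left, List.map_id',
    Nat.mul_left_cancel_iff hp0]
  simp only [Nat.mul_dvd_mul_iff_left hp0, Nat.mul_lt_mul_left hp0]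
  rfl

lemma omegaStar_mul_eq_image (hp : 1 < p) (hpq : Nat.Coprime p q) (hU : ¬ q ∣ p * U) :
    OmegaStar p q (p * U) = List.map (p * ·) '' Omega p q U := by
  ext l
  constructor
  · intro hl
    have hmap : (l.map (· / p)).map (p * ·) = l := by
      rw [List.map_map]
      exact List.map_congr_left (fun x hx => Nat.mul_div_cancel' (dvd_of_mem_omegaStar hU hl hx))
        |>.trans (List.map_id l)
    refine ⟨l.map (· / p), ?_, hmap⟩
    rw [Omega, Set.mem_ofPred_eq, ← isSCPartition_map_mul_iff hp hpq, hmap]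
    exact hl.1
  · rintro ⟨l, hl, rfl⟩
    refine ⟨(isSCPartition_map_mul_iff hp hpq).mpr hl, ?_⟩
    simp only [List.mem_map, not_exists, not_and]
    intro x _ h
    exact absurd (Nat.eq_one_of_mul_eq_one_right h) (by omega)

lemma Wstar_mul (hp : 1 < p) (hpq : Nat.Coprime p q) (hU : ¬ q ∣ p * U) :
    Wstar p q (p * U) = W p q U := by
  rw [Wstar, W, omegaStar_mul_eq_image hp hpq hU]
  exact Set.ncard_image_of_injective _
    (List.map_injective_iff.mpr (mul_right_injective₀ (by omega)))

end

lemma W_two_succ_eq_W_half {q : ℕ} (hq : Nat.Coprime 2 q) {N : ℕ} (hN : ¬ q ∣ N)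
    (hN' : ¬ q ∣ N + 1) : W 2 q (N + 1) = W 2 q ((N + 1) / 2) := by
  have hq0 : 0 < q := Nat.pos_of_ne_zero fun h => by simp [h] at hq
  rw [W, omega_succ_eq_union two_pos hq0]
  obtain ⟨k, rfl | rfl⟩ := Nat.even_or_odd' N
  · rw [omegaStar_eq_empty (by omega) hN', Set.empty_union,
      Set.ncard_image_of_injective _ (List.append_left_injective [1]), ← Wstar,
      Wstar_mul one_lt_two hq hN]
    congr 1
    omega
  · rw [omegaStar_eq_empty (by omega) hN, Set.image_empty, Set.union_empty, ← Wstar]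
    rw [show 2 * k + 1 + 1 = 2 * (k + 1) by ring] at hN' ⊢
    rw [Wstar_mul one_lt_two hq hN', Nat.mul_div_cancel_left _ two_pos]

theorem W_qU_add_r_p_eq_two_general (q : ℕ) (hq2 : Nat.Coprime 2 q)
    (U r : ℕ) (hr1 : 2 ≤ r) (hr2 : r ≤ q - 1) :
    W 2 q (q * U + r) = W 2 q ((q * U + r) / 2) := by
  have hq_ndvd : ∀ t, 0 < t → t < q → ¬ q ∣ q * U + t := fun t ht htq =>
    (Nat.dvd_add_right (dvd_mul_right q U)).not.mpr (Nat.not_dvd_of_pos_of_lt ht htq)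
  obtain ⟨s, rfl⟩ : ∃ s, r = s + 1 := ⟨r - 1, by omega⟩
  exact W_two_succ_eq_W_half hq2 (hq_ndvd s (by omega) (by omega))
    (hq_ndvd (s + 1) (by omega) (by omega))

theorem W_qU_add_r_p_eq_two (q : ℕ) (hq : 1 < q) (hq2 : Nat.Coprime 2 q)
    (U r : ℕ) (hr1 : 2 ≤ r) (hr2 : r ≤ q - 1) :
    W 2 q (q * U + r) = W 2 q ((q * U + r) / 2) :=
  W_qU_add_r_p_eq_two_general q hq2 U r hr1 hr2
end

section
/- For (p,q) = (2,3) and every integer U ≥ 1, W(3U+1) = W(U) + W(3·⌊(U+1)/2⌋ − 1). -/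
open Set

def IsPQNumber (p q x : ℕ) : Prop := ∃ a b : ℕ, x = p ^ a * q ^ b

def OmegaDvd (p q k n : ℕ) : Set (List ℕ) := {l | l ∈ Omega p q n ∧ ∀ x ∈ l, k ∣ x}

section General

variable {p q k n : ℕ} {l : List ℕ}

lemma IsPQNumber.pos (hp : 0 < p) (hq : 0 < q) {x : ℕ} (hx : IsPQNumber p q x) : 0 < x := by
  obtain ⟨a, b, rfl⟩ := hx
  positivity

lemma isPQNumber_comm {x : ℕ} : IsPQNumber p q x ↔ IsPQNumber q p x :=
  ⟨fun ⟨a, b, h⟩ => ⟨b, a, h.trans (mul_comm _ _)⟩, fun ⟨a, b, h⟩ => ⟨b, a, h.trans (mul_comm _ _)⟩⟩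

lemma isPQNumber_mul_left_iff (hp : p.Prime) (hpq : ¬p ∣ q) {x : ℕ} :
    IsPQNumber p q (p * x) ↔ IsPQNumber p q x := by
  constructor
  · rintro ⟨_ | a, b, h⟩
    · exact absurd (hp.dvd_of_dvd_pow (Dvd.intro x (by simpa using h))) hpq
    · exact ⟨a, b, Nat.eq_of_mul_eq_mul_left hp.pos (by rw [h]; ring)⟩
  · rintro ⟨a, b, rfl⟩
    exact ⟨a + 1, b, by ring⟩

lemma IsPQNumber.dvd_or_dvd {x : ℕ} (hx : IsPQNumber p q x) (h1 : x ≠ 1) : p ∣ x ∨ q ∣ x := by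
  obtain ⟨_ | a, _ | b, rfl⟩ := hx
  · simp at h1
  · exact .inr (dvd_mul_of_dvd_right (dvd_pow_self q b.succ_ne_zero) _)
  all_goals exact .inl (dvd_mul_of_dvd_left (dvd_pow_self p a.succ_ne_zero) _)

lemma pairwise_of_mem_omega (hl : l ∈ Omega p q n) : l.Pairwise fun x y => y ∣ x ∧ y < x :=
  haveI : Trans (fun x y : ℕ => y ∣ x ∧ y < x) (fun x y => y ∣ x ∧ y < x)
      (fun x y => y ∣ x ∧ y < x) := ⟨fun h₁ h₂ => ⟨h₂.1.trans h₁.1, h₂.2.trans h₁.2⟩⟩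
  List.isChain_iff_pairwise.mp hl.2.1

lemma getLast_dvd_of_mem_omega (hl : l ∈ Omega p q n) (hne : l ≠ []) {x : ℕ} (hx : x ∈ l) :
    l.getLast hne ∣ x := by
  have hp := pairwise_of_mem_omega hl
  rw [← List.dropLast_append_getLast hne] at hp hx
  rcases List.mem_append.mp hx with hx | hx
  · exact ((List.pairwise_append.mp hp).2.2 x hx _ (List.mem_singleton_self _)).1
  · rw [List.mem_singleton.mp hx]

lemma dvd_of_mem_omega (hl : l ∈ Omega p q n) (hk : ∀ x ∈ l, k ∣ x) : k ∣ n :=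
  hl.2.2 ▸ List.dvd_sum hk

lemma finite_omega : (Omega p q n).Finite := by
  refine ((Finset.range (n + 1)).powerset.finite_toSet.image fun s => s.sort (· ≥ ·)).subset ?_
  intro l hl
  have hp := pairwise_of_mem_omega hl
  refine ⟨l.toFinset, ?_, ?_⟩
  · simp only [Finset.coe_powerset, mem_preimage, mem_powerset_iff, Finset.coe_subset]
    intro x hx
    rw [List.mem_toFinset] at hx
    exact Finset.mem_range_succ_iff.mpr (hl.2.2 ▸ List.le_sum_of_mem hx)
  · exact (List.toFinset_sort _ (hp.imp fun h => h.2.ne')).mpr (hp.imp fun h => h.2.le)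

lemma omegaStar_eq_union (hp : p ≠ 1) (hq : q ≠ 1) :
    OmegaStar p q n = OmegaDvd p q p n ∪ OmegaDvd p q q n := by
  ext l
  constructor
  · rintro ⟨hl, h1⟩
    rcases eq_or_ne l [] with rfl | hne
    · exact .inl ⟨hl, by simp⟩
    have hlast := List.getLast_mem hne
    rcases IsPQNumber.dvd_or_dvd (hl.1 _ hlast) (fun h => h1 (h ▸ hlast)) with h | h
    · exact .inl ⟨hl, fun x hx => h.trans (getLast_dvd_of_mem_omega hl hne hx)⟩
    · exact .inr ⟨hl, fun x hx => h.trans (getLast_dvd_of_mem_omega hl hne hx)⟩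
  · rintro (⟨hl, h⟩ | ⟨hl, h⟩)
    · exact ⟨hl, fun h1 => hp (Nat.dvd_one.mp (h 1 h1))⟩
    · exact ⟨hl, fun h1 => hq (Nat.dvd_one.mp (h 1 h1))⟩

lemma omegaDvd_inter_omegaDvd (hpq : p.Coprime q) :
    OmegaDvd p q p n ∩ OmegaDvd p q q n = OmegaDvd p q (p * q) n := by
  ext l
  simp only [OmegaDvd, mem_inter_iff]
  exact ⟨fun ⟨⟨hl, hp⟩, ⟨_, hq⟩⟩ => ⟨hl, fun x hx => hpq.mul_dvd_of_dvd_of_dvd (hp x hx) (hq x hx)⟩,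
    fun ⟨hl, h⟩ => ⟨⟨hl, fun x hx => (dvd_mul_right p q).trans (h x hx)⟩,
      ⟨hl, fun x hx => (dvd_mul_left q p).trans (h x hx)⟩⟩⟩

lemma Wstar_add_ncard_omegaDvd_mul (hp : p ≠ 1) (hq : q ≠ 1) (hpq : p.Coprime q) :
    Wstar p q n + (OmegaDvd p q (p * q) n).ncard =
      (OmegaDvd p q p n).ncard + (OmegaDvd p q q n).ncard := by
  rw [Wstar, omegaStar_eq_union hp hq, ← omegaDvd_inter_omegaDvd hpq]
  exact ncard_union_add_ncard_inter _ _ (finite_omega.subset fun _ h => h.1)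
    (finite_omega.subset fun _ h => h.1)

lemma omegaDvd_eq_empty (hk : ¬k ∣ n) : OmegaDvd p q k n = ∅ :=
  eq_empty_iff_forall_notMem.mpr fun _ ⟨hl, h⟩ => hk (dvd_of_mem_omega hl h)

section Scaling

variable (hk : 0 < k) (hkpq : ∀ x, IsPQNumber p q (k * x) ↔ IsPQNumber p q x)
include hk hkpq

lemma map_mul_left_mem_omega_iff {m : List ℕ} :
    m.map (k * ·) ∈ Omega p q (k * n) ↔ m ∈ Omega p q n := by
  have hsum : (m.map (k * ·)).sum = k * m.sum := by simpa using List.sum_map_mul_left m id k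
  refine Iff.and (List.forall_mem_map.trans (forall₂_congr fun x _ => hkpq x)) (Iff.and ?_ ?_)
  · exact (List.isChain_map _).trans
      (by simp only [Nat.mul_dvd_mul_iff_left hk, Nat.mul_lt_mul_left hk]; rfl)
  · rw [hsum]
    exact Nat.mul_right_inj hk.ne'

lemma omegaDvd_mul_left : OmegaDvd p q k (k * n) = List.map (k * ·) '' Omega p q n := by
  ext l
  constructor
  · rintro ⟨hl, hdvd⟩
    have hl' : (l.map (· / k)).map (k * ·) = l := by
      rw [List.map_map]
      exact (List.map_congr_left fun x hx => Nat.mul_div_cancel' (hdvd x hx)).trans l.map_id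
    exact ⟨l.map (· / k), (map_mul_left_mem_omega_iff hk hkpq).mp (by rwa [hl']), hl'⟩
  · rintro ⟨m, hm, rfl⟩
    exact ⟨(map_mul_left_mem_omega_iff hk hkpq).mpr hm, by simp⟩

lemma ncard_omegaDvd_mul_left : (OmegaDvd p q k (k * n)).ncard = W p q n := by
  rw [omegaDvd_mul_left hk hkpq, W,
    ncard_image_of_injective _ (List.map_injective_iff.mpr (mul_right_injective₀ hk.ne'))]

end Scaling

section AppendOne

variable (hp : 0 < p) (hq : 0 < q)
include hp hq

lemma append_one_mem_omega_iff : l ++ [1] ∈ Omega p q (n + 1) ↔ l ∈ OmegaStar p q n := by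
  constructor
  · intro hl
    have hpw := List.pairwise_append.mp (pairwise_of_mem_omega hl)
    refine ⟨⟨fun x hx => hl.1 x (List.mem_append_left _ hx), ?_, ?_⟩, ?_⟩
    · exact hpw.1.isChain
    · simpa using hl.2.2
    · exact fun h1 => (hpw.2.2 1 h1 1 (List.mem_singleton_self _)).2.false
  · rintro ⟨⟨hform, hchain, hsum⟩, h1⟩
    refine ⟨?_, ?_, by simp [hsum]⟩
    · intro x hx
      rcases List.mem_append.mp hx with hx | hx
      · exact hform x hx
      · exact ⟨0, 0, by simpa using hx⟩
    · refine List.isChain_append.mpr ⟨hchain, List.isChain_singleton 1, ?_⟩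
      intro x hx y hy
      have hxl := List.mem_of_mem_getLast? hx
      obtain rfl : y = 1 := by simpa using hy.symm
      have hxpos := IsPQNumber.pos hp hq (hform x hxl)
      exact ⟨one_dvd x, lt_of_le_of_ne hxpos (fun h => h1 (h ▸ hxl))⟩

lemma omega_add_one_eq_union :
    Omega p q (n + 1) = OmegaStar p q (n + 1) ∪ (· ++ [1]) '' OmegaStar p q n := by
  ext l
  constructor
  · intro hl
    by_cases h1 : 1 ∈ l
    · have hne : l ≠ [] := List.ne_nil_of_mem h1
      have hlast : l.getLast hne = 1 := Nat.dvd_one.mp (getLast_dvd_of_mem_omega hl hne h1)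
      have hl' : l.dropLast ++ [1] = l := hlast ▸ List.dropLast_append_getLast hne
      exact .inr ⟨l.dropLast, (append_one_mem_omega_iff hp hq).mp (hl'.symm ▸ hl), hl'⟩
    · exact .inl ⟨hl, h1⟩
  · rintro (hl | ⟨m, hm, rfl⟩)
    · exact hl.1
    · exact (append_one_mem_omega_iff hp hq).mpr hm

lemma W_add_one : W p q (n + 1) = Wstar p q (n + 1) + Wstar p q n := by
  have hdisj : Disjoint (OmegaStar p q (n + 1)) ((· ++ [1]) '' OmegaStar p q n) :=
    disjoint_left.mpr fun _ h ⟨_, _, hm⟩ =>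
      h.2 (hm ▸ List.mem_append_right _ (List.mem_singleton_self 1))
  rw [W, omega_add_one_eq_union hp hq, ncard_union_eq hdisj (finite_omega.subset fun _ h => h.1)
    ((finite_omega.subset fun _ h => h.1).image _), Wstar, Wstar,
    ncard_image_of_injective _ (List.append_left_injective [1])]

end AppendOne

end General

section TwoThree

lemma isPQNumber_two_mul_iff {x : ℕ} : IsPQNumber 2 3 (2 * x) ↔ IsPQNumber 2 3 x :=
  isPQNumber_mul_left_iff Nat.prime_two (by norm_num)

lemma isPQNumber_three_mul_iff {x : ℕ} : IsPQNumber 2 3 (3 * x) ↔ IsPQNumber 2 3 x := by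
  rw [isPQNumber_comm, isPQNumber_comm (x := x)]
  exact isPQNumber_mul_left_iff Nat.prime_three (by norm_num)

lemma isPQNumber_six_mul_iff {x : ℕ} : IsPQNumber 2 3 (6 * x) ↔ IsPQNumber 2 3 x := by
  rw [show 6 * x = 2 * (3 * x) by ring, isPQNumber_two_mul_iff, isPQNumber_three_mul_iff]

lemma W_two_three_add_one (n : ℕ) : W 2 3 (n + 1) = Wstar 2 3 (n + 1) + Wstar 2 3 n :=
  W_add_one two_pos three_pos

lemma Wstar_two_three_add_ncard_omegaDvd_six (n : ℕ) :
    Wstar 2 3 n + (OmegaDvd 2 3 6 n).ncard =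
      (OmegaDvd 2 3 2 n).ncard + (OmegaDvd 2 3 3 n).ncard :=
  Wstar_add_ncard_omegaDvd_mul (by norm_num) (by norm_num) (by norm_num)

lemma Wstar_two_three_eq_zero {n : ℕ} (h2 : ¬2 ∣ n) (h3 : ¬3 ∣ n) : Wstar 2 3 n = 0 := by
  have h := Wstar_two_three_add_ncard_omegaDvd_six n
  rw [omegaDvd_eq_empty h2, omegaDvd_eq_empty h3, ncard_empty] at h
  omega

lemma Wstar_two_three_two_mul {m : ℕ} (h3 : ¬3 ∣ m) : Wstar 2 3 (2 * m) = W 2 3 m := by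
  have h := Wstar_two_three_add_ncard_omegaDvd_six (2 * m)
  rwa [omegaDvd_eq_empty (k := 6) (by omega), omegaDvd_eq_empty (k := 3) (by omega),
    ncard_omegaDvd_mul_left two_pos fun _ => isPQNumber_two_mul_iff, ncard_empty] at h

lemma Wstar_two_three_three_mul {m : ℕ} (h2 : ¬2 ∣ m) : Wstar 2 3 (3 * m) = W 2 3 m := by
  have h := Wstar_two_three_add_ncard_omegaDvd_six (3 * m)
  rwa [omegaDvd_eq_empty (k := 6) (by omega), omegaDvd_eq_empty (k := 2) (by omega),
    ncard_omegaDvd_mul_left three_pos fun _ => isPQNumber_three_mul_iff, ncard_empty, zero_add]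
    at h

lemma Wstar_two_three_six_mul_add (m : ℕ) :
    Wstar 2 3 (6 * m) + W 2 3 m = W 2 3 (3 * m) + W 2 3 (2 * m) := by
  have h := Wstar_two_three_add_ncard_omegaDvd_six (6 * m)
  have h6 : (OmegaDvd 2 3 6 (6 * m)).ncard = W 2 3 m :=
    ncard_omegaDvd_mul_left (by norm_num) fun _ => isPQNumber_six_mul_iff
  have h2 : (OmegaDvd 2 3 2 (6 * m)).ncard = W 2 3 (3 * m) := by
    rw [show 6 * m = 2 * (3 * m) by ring]
    exact ncard_omegaDvd_mul_left two_pos fun _ => isPQNumber_two_mul_iff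
  have h3 : (OmegaDvd 2 3 3 (6 * m)).ncard = W 2 3 (2 * m) := by
    rw [show 6 * m = 3 * (2 * m) by ring]
    exact ncard_omegaDvd_mul_left three_pos fun _ => isPQNumber_three_mul_iff
  omega

lemma W_six_mul_add_two (S : ℕ) : W 2 3 (6 * S + 2) = W 2 3 (3 * S + 1) := by
  rw [W_two_three_add_one (6 * S + 1),
    Wstar_two_three_eq_zero (n := 6 * S + 1) (by omega) (by omega),
    show 6 * S + 1 + 1 = 2 * (3 * S + 1) by ring, Wstar_two_three_two_mul (by omega), add_zero]

lemma W_six_mul_add_three (S : ℕ) : W 2 3 (6 * S + 3) = W 2 3 (2 * S + 1) + W 2 3 (3 * S + 1) := by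
  rw [W_two_three_add_one (6 * S + 2), show 6 * S + 2 + 1 = 3 * (2 * S + 1) by ring,
    Wstar_two_three_three_mul (by omega), show 6 * S + 2 = 2 * (3 * S + 1) by ring,
    Wstar_two_three_two_mul (by omega)]

lemma W_six_mul_add_four (S : ℕ) : W 2 3 (6 * S + 4) = W 2 3 (3 * S + 2) + W 2 3 (2 * S + 1) := by
  rw [W_two_three_add_one (6 * S + 3), show 6 * S + 3 + 1 = 2 * (3 * S + 2) by ring,
    Wstar_two_three_two_mul (by omega), show 6 * S + 3 = 3 * (2 * S + 1) by ring,
    Wstar_two_three_three_mul (by omega)]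

lemma W_six_mul_add_five (S : ℕ) : W 2 3 (6 * S + 5) = W 2 3 (3 * S + 2) := by
  rw [W_two_three_add_one (6 * S + 4),
    Wstar_two_three_eq_zero (n := 6 * S + 4 + 1) (by omega) (by omega),
    show 6 * S + 4 = 2 * (3 * S + 2) by ring, Wstar_two_three_two_mul (by omega), zero_add]

lemma W_six_mul_add_six (S : ℕ) :
    W 2 3 (6 * S + 6) + W 2 3 (S + 1) = W 2 3 (3 * S + 3) + W 2 3 (2 * S + 2) := by
  rw [W_two_three_add_one (6 * S + 5),
    Wstar_two_three_eq_zero (n := 6 * S + 5) (by omega) (by omega),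
    add_zero, show 6 * S + 5 + 1 = 6 * (S + 1) by ring, Wstar_two_three_six_mul_add]
  ring_nf

lemma W_six_mul_add_seven (S : ℕ) : W 2 3 (6 * S + 7) = W 2 3 (6 * S + 6) := by
  rw [W_two_three_add_one (6 * S + 6),
    Wstar_two_three_eq_zero (n := 6 * S + 6 + 1) (by omega) (by omega),
    W_two_three_add_one (6 * S + 5),
    Wstar_two_three_eq_zero (n := 6 * S + 5) (by omega) (by omega),
    zero_add, add_zero]

theorem W_three_mul_add_three (V : ℕ) :
    W 2 3 (3 * V + 3) = W 2 3 (3 * V + 2) + W 2 3 (V + 1) := by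
  induction V using Nat.strong_induction_on with
  | _ V ih =>
    obtain ⟨S, rfl | rfl⟩ : ∃ S, V = 2 * S ∨ V = 2 * S + 1 := ⟨V / 2, by omega⟩
    · rw [show 3 * (2 * S) + 3 = 6 * S + 3 by ring, show 3 * (2 * S) + 2 = 6 * S + 2 by ring,
        W_six_mul_add_three, W_six_mul_add_two, add_comm]
    · have hS := ih S (by omega)
      have h6 := W_six_mul_add_six S
      have h5 := W_six_mul_add_five S
      rw [show 3 * (2 * S + 1) + 3 = 6 * S + 6 by ring,
        show 3 * (2 * S + 1) + 2 = 6 * S + 5 by ring, show 2 * S + 1 + 1 = 2 * S + 2 by ring]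
      omega

end TwoThree

theorem W_three_U_add_one (U : ℕ) (hU : 1 ≤ U) :
    W 2 3 (3 * U + 1) = W 2 3 U + W 2 3 (3 * ((U + 1) / 2) - 1) := by
  obtain ⟨S, rfl | rfl⟩ : ∃ S, U = 2 * S + 1 ∨ U = 2 * S + 2 := ⟨(U - 1) / 2, by omega⟩
  · rw [show 3 * (2 * S + 1) + 1 = 6 * S + 4 by ring,
      show 3 * ((2 * S + 1 + 1) / 2) - 1 = 3 * S + 2 by omega, W_six_mul_add_four, add_comm]
  · have h := W_three_mul_add_three (2 * S + 1)
    rw [show 3 * (2 * S + 1) + 3 = 6 * S + 6 by ring, show 3 * (2 * S + 1) + 2 = 6 * S + 5 by ring,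
      W_six_mul_add_five, show 2 * S + 1 + 1 = 2 * S + 2 by ring] at h
    rw [show 3 * (2 * S + 2) + 1 = 6 * S + 7 by ring,
      show 3 * ((2 * S + 2 + 1) / 2) - 1 = 3 * S + 2 by omega, W_six_mul_add_seven, h, add_comm]
end
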